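/- arXiv:2306.16847 — 5 statements merged into one kernel-verified Lean document; each statement's English description precedes it below -/
import Mathlib

section
/- The fundamental matrix Ω = (I + L)^{-1} of the FJ model on a directed graph is row stochastic: every entry is nonnegative and each row sums to 1, i.e., Ω·1 = 1. -/
open Matrix Finset

/-- The fundamental matrix Ω = (I+L)⁻¹ of the FJ model on a digraph is row stochastic:
every entry is nonnegative and each row sums to 1. -/
theorem stmt_1 {n : ℕ} (A : Matrix (Fin n) (Fin n) ℝ)
    (hA : ∀ i j, A i j = 0 ∨ A i j = 1) (hdiag : ∀ i, A i i = 0)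
    (D : Matrix (Fin n) (Fin n) ℝ) (hD : D = Matrix.diagonal (fun i => ∑ j, A i j))
    (L : Matrix (Fin n) (Fin n) ℝ) (hL : L = D - A)
    (Ω : Matrix (Fin n) (Fin n) ℝ) (hΩ : Ω = (1 + L)⁻¹) :
    (∀ i j, 0 ≤ Ω i j) ∧ (∀ i, ∑ j, Ω i j = 1) := by
  set d : Fin n → ℝ := fun i => ∑ j, A i j with hd
  have hA0 : ∀ i j, 0 ≤ A i j := by
    intro i j; rcases hA i j with h | h <;> simp [h]
  -- formula for mulVec of M = 1 + L
  have hM : ∀ (x : Fin n → ℝ) (i : Fin n),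
      ((1 + L) *ᵥ x) i = x i + d i * x i - ∑ j, A i j * x j := by
    intro x i
    simp [hL, hD, Matrix.add_mulVec, Matrix.sub_mulVec, Matrix.one_mulVec,
      Matrix.mulVec, dotProduct, Matrix.diagonal_apply, Finset.sum_ite_eq,
      Pi.add_apply, Pi.sub_apply]
    simp_rw [add_mul, sub_mul]
    rw [Finset.sum_add_distrib, Finset.sum_sub_distrib]
    simp [Matrix.one_apply, ite_mul, Finset.sum_ite_eq]
    ring
  have hmin : ∀ (x : Fin n → ℝ) (k : Fin n), (∀ l, x k ≤ x l) → ((1 + L) *ᵥ x) k ≤ x k := by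
    intro x k hk
    rw [hM]
    have : d k * x k ≤ ∑ j, A k j * x j := by
      rw [hd, Finset.sum_mul]
      exact Finset.sum_le_sum fun j _ => mul_le_mul_of_nonneg_left (hk j) (hA0 k j)
    linarith
  have hmax : ∀ (x : Fin n → ℝ) (k : Fin n), (∀ l, x l ≤ x k) → x k ≤ ((1 + L) *ᵥ x) k := by
    intro x k hk
    rw [hM]
    have : ∑ j, A k j * x j ≤ d k * x k := by
      rw [hd, Finset.sum_mul]
      exact Finset.sum_le_sum fun j _ => mul_le_mul_of_nonneg_left (hk j) (hA0 k j)
    linarith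
  -- invertibility of M
  have hdet : (1 + L).det ≠ 0 := by
    intro h
    rw [← Matrix.exists_mulVec_eq_zero_iff] at h
    obtain ⟨v, hv, hv0⟩ := h
    apply hv
    funext i
    obtain ⟨k, -, hk⟩ := Finset.exists_min_image Finset.univ v ⟨i, Finset.mem_univ i⟩
    obtain ⟨m, -, hm⟩ := Finset.exists_max_image Finset.univ v ⟨i, Finset.mem_univ i⟩
    have h1 : ((1 + L) *ᵥ v) k ≤ v k := hmin v k (fun l => hk l (Finset.mem_univ l))
    have h2 : v m ≤ ((1 + L) *ᵥ v) m := hmax v m (fun l => hm l (Finset.mem_univ l))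
    rw [hv0] at h1 h2
    simp only [Pi.zero_apply] at h1 h2
    have := hk i (Finset.mem_univ i)
    have := hm i (Finset.mem_univ i)
    simp only [Pi.zero_apply]
    linarith
  have hMΩ : (1 + L) * Ω = 1 := by rw [hΩ]; exact Matrix.mul_nonsing_inv _ (isUnit_iff_ne_zero.mpr hdet)
  have hΩM : Ω * (1 + L) = 1 := by rw [hΩ]; exact Matrix.nonsing_inv_mul _ (isUnit_iff_ne_zero.mpr hdet)
  constructor
  · intro i j
    set x : Fin n → ℝ := fun i => Ω i j with hx
    have hcol : ∀ k, ((1 + L) *ᵥ x) k = (1 : Matrix (Fin n) (Fin n) ℝ) k j := by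
      intro k
      have : ((1 + L) * Ω) k j = (1 : Matrix (Fin n) (Fin n) ℝ) k j := by rw [hMΩ]
      simpa [Matrix.mul_apply, Matrix.mulVec, dotProduct, hx] using this
    obtain ⟨k, -, hk⟩ := Finset.exists_min_image Finset.univ x ⟨i, Finset.mem_univ i⟩
    have h1 : ((1 + L) *ᵥ x) k ≤ x k := hmin x k (fun l => hk l (Finset.mem_univ l))
    rw [hcol k] at h1
    have h0 : (0 : ℝ) ≤ (1 : Matrix (Fin n) (Fin n) ℝ) k j := by
      by_cases h : k = j <;> simp [Matrix.one_apply, h]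
    have := hk i (Finset.mem_univ i)
    simp only [hx] at this ⊢
    linarith
  · intro i
    have hL1 : (1 + L) *ᵥ (fun _ => (1 : ℝ)) = fun _ => (1 : ℝ) := by
      funext k
      rw [hM]
      simp [hd]
    have : Ω *ᵥ (fun _ => (1 : ℝ)) = fun _ => (1 : ℝ) := by
      calc Ω *ᵥ (fun _ => (1 : ℝ)) = Ω *ᵥ ((1 + L) *ᵥ (fun _ => (1 : ℝ))) := by rw [hL1]
        _ = (Ω * (1 + L)) *ᵥ (fun _ => (1 : ℝ)) := by rw [Matrix.mulVec_mulVec]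
        _ = fun _ => (1 : ℝ) := by rw [hΩM]; simp [Matrix.one_mulVec]
    have := congrFun this i
    simpa [Matrix.mulVec, dotProduct] using this
end

section
/- For the fundamental matrix Ω = (I+L)^{-1} of a directed graph, every diagonal entry satisfies 0 < ω_{ii} ≤ 1, and ω_{ii} = 1 if and only if node i has out-degree 0. -/
open Matrix Finset

/-- Every diagonal entry of Ω = (I+L)⁻¹ satisfies 0 < ω_{ii} ≤ 1, with ω_{ii} = 1
iff node i has out-degree 0. -/
theorem stmt_2 {n : ℕ} (A : Matrix (Fin n) (Fin n) ℝ)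
    (hA : ∀ i j, A i j = 0 ∨ A i j = 1) (hdiag : ∀ i, A i i = 0)
    (D : Matrix (Fin n) (Fin n) ℝ) (hD : D = Matrix.diagonal (fun i => ∑ j, A i j))
    (L : Matrix (Fin n) (Fin n) ℝ) (hL : L = D - A)
    (Ω : Matrix (Fin n) (Fin n) ℝ) (hΩ : Ω = (1 + L)⁻¹) (i : Fin n) :
    0 < Ω i i ∧ Ω i i ≤ 1 ∧ (Ω i i = 1 ↔ ∑ j, A i j = 0) := by
  have hA0 : ∀ i j, (0:ℝ) ≤ A i j := fun i j => by rcases hA i j with h | h <;> simp [h]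
  set d : Fin n → ℝ := fun i => ∑ j, A i j with hd
  have hdapp : ∀ p, d p = ∑ l, A p l := fun p => by rw [hd]
  have hd0 : ∀ k, 0 ≤ d k := fun k => by
    rw [hdapp]; exact Finset.sum_nonneg fun j _ => hA0 k j
  set M : Matrix (Fin n) (Fin n) ℝ := 1 + L with hMdef
  -- the key row computation
  have key : ∀ (k : Fin n) (x : Fin n → ℝ),
      ∑ l, M k l * x l = x k + d k * x k - ∑ l, A k l * x l := by
    intro k x
    have h1 : ∀ l, M k l * x l =
        ((if k = l then x l else 0) + (if k = l then d k * x l else 0)) - A k l * x l := by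
      intro l
      simp only [hMdef, hL, hD, Matrix.add_apply, Matrix.sub_apply, Matrix.one_apply,
        Matrix.diagonal_apply]
      split <;> ring
    rw [Finset.sum_congr rfl (fun l _ => h1 l)]
    rw [Finset.sum_sub_distrib, Finset.sum_add_distrib]
    simp [Finset.sum_ite_eq]
  have hMii : M i i = 1 + d i := by
    simp only [hMdef, hL, hD, Matrix.add_apply, Matrix.sub_apply, Matrix.one_apply,
      Matrix.diagonal_apply, hdiag i]
    simp
  -- invertibility via strict diagonal dominance
  have hdet : M.det ≠ 0 := by
    intro h0
    obtain ⟨v, hv, hMv⟩ := Matrix.exists_mulVec_eq_zero_iff.mpr h0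
    obtain ⟨m, hm⟩ : ∃ m, v m ≠ 0 := by
      by_contra h; push_neg at h; exact hv (funext h)
    obtain ⟨k, -, hk⟩ := Finset.exists_max_image Finset.univ (fun l => |v l|)
      ⟨m, Finset.mem_univ m⟩
    have hrow : v k + d k * v k - ∑ l, A k l * v l = 0 := by
      rw [← key k v]
      have := congrFun hMv k
      simpa [Matrix.mulVec, dotProduct] using this
    have hS : |∑ l, A k l * v l| ≤ d k * |v k| := by
      calc |∑ l, A k l * v l| ≤ ∑ l, |A k l * v l| := Finset.abs_sum_le_sum_abs _ _
        _ ≤ ∑ l, A k l * |v k| := by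
            apply Finset.sum_le_sum
            intro l _
            rw [abs_mul, abs_of_nonneg (hA0 k l)]
            exact mul_le_mul_of_nonneg_left (hk l (Finset.mem_univ l)) (hA0 k l)
        _ = d k * |v k| := by rw [← Finset.sum_mul, ← hdapp]
    have heq : (1 + d k) * v k = ∑ l, A k l * v l := by linarith
    have h2 : (1 + d k) * |v k| ≤ d k * |v k| := by
      have h3 := hS
      rw [← heq] at h3
      rwa [abs_mul, abs_of_pos (by linarith [hd0 k] : (0:ℝ) < 1 + d k)] at h3
    have h4 : |v k| ≤ 0 := by nlinarith
    have h5 := abs_pos.mpr hm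
    have h6 := hk m (Finset.mem_univ m)
    linarith
  have hdetU : IsUnit M.det := isUnit_iff_ne_zero.mpr hdet
  have hMΩ : M * M⁻¹ = 1 := Matrix.mul_nonsing_inv M hdetU
  have hΩM : M⁻¹ * M = 1 := Matrix.nonsing_inv_mul M hdetU
  subst hΩ
  -- entrywise nonnegativity of the inverse
  have hnn : ∀ j k, 0 ≤ M⁻¹ k j := by
    intro j k
    obtain ⟨p, -, hp⟩ := Finset.exists_min_image Finset.univ (fun l => M⁻¹ l j)
      ⟨k, Finset.mem_univ k⟩
    have h1 : M⁻¹ p j + d p * M⁻¹ p j - ∑ l, A p l * M⁻¹ l j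
        = if p = j then 1 else 0 := by
      rw [← key p (fun l => M⁻¹ l j)]
      have := congrFun (congrFun hMΩ p) j
      simpa [Matrix.mul_apply, Matrix.one_apply] using this
    have h2 : d p * M⁻¹ p j ≤ ∑ l, A p l * M⁻¹ l j := by
      have h3 : d p * M⁻¹ p j = ∑ l, A p l * M⁻¹ p j := by
        rw [← Finset.sum_mul, ← hdapp]
      rw [h3]
      exact Finset.sum_le_sum fun l _ =>
        mul_le_mul_of_nonneg_left (hp l (Finset.mem_univ l)) (hA0 p l)
    have hite : (0:ℝ) ≤ if p = j then (1:ℝ) else 0 := by split <;> norm_num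
    have h4 : 0 ≤ M⁻¹ p j := by linarith
    exact le_trans h4 (hp k (Finset.mem_univ k))
  -- row sums of M are 1
  have hrowM : ∀ k, ∑ l, M k l = 1 := by
    intro k
    have h := key k (fun _ => 1)
    simp only [mul_one] at h
    rw [← hdapp] at h
    rw [h]; ring
  -- row sums of the inverse are 1
  have hrowΩ : ∀ k, ∑ l, M⁻¹ k l = 1 := by
    intro k
    have h1 : ∑ q, (M⁻¹ * M) k q = 1 := by
      rw [hΩM]
      simp [Matrix.one_apply, Finset.sum_ite_eq]
    calc ∑ l, M⁻¹ k l = ∑ l, M⁻¹ k l * ∑ q, M l q := by simp [hrowM]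
      _ = ∑ l, ∑ q, M⁻¹ k l * M l q := by simp [Finset.mul_sum]
      _ = ∑ q, ∑ l, M⁻¹ k l * M l q := Finset.sum_comm
      _ = ∑ q, (M⁻¹ * M) k q := by simp [Matrix.mul_apply]
      _ = 1 := h1
  -- column i equation at row i
  have hcoli : M⁻¹ i i + d i * M⁻¹ i i - ∑ l, A i l * M⁻¹ l i = 1 := by
    rw [← key i (fun l => M⁻¹ l i)]
    have := congrFun (congrFun hMΩ i) i
    simpa [Matrix.mul_apply, Matrix.one_apply] using this
  have hS : 0 ≤ ∑ l, A i l * M⁻¹ l i :=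
    Finset.sum_nonneg fun l _ => mul_nonneg (hA0 i l) (hnn i l)
  have hpos : 0 < M⁻¹ i i := by
    rcases lt_or_eq_of_le (hnn i i) with h | h
    · exact h
    · exfalso
      rw [← h] at hcoli
      simp at hcoli
      linarith
  have hle : M⁻¹ i i ≤ 1 := by
    rw [← hrowΩ i]
    exact Finset.single_le_sum (f := fun l => M⁻¹ i l)
      (fun l _ => hnn l i) (Finset.mem_univ i)
  refine ⟨hpos, hle, ?_, ?_⟩
  · -- Ω i i = 1 → out-degree 0
    intro h1
    have hsum := hrowΩ i
    rw [← Finset.add_sum_erase _ _ (Finset.mem_univ i), h1] at hsum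
    have hz : ∀ l ∈ Finset.univ.erase i, M⁻¹ i l = 0 := by
      have hnn' : ∀ l ∈ Finset.univ.erase i, (0:ℝ) ≤ M⁻¹ i l := fun l _ => hnn l i
      intro l hl
      exact (Finset.sum_eq_zero_iff_of_nonneg hnn').mp (by linarith) l hl
    have h2 : ∑ l, M⁻¹ i l * M l i = 1 := by
      have := congrFun (congrFun hΩM i) i
      simpa [Matrix.mul_apply, Matrix.one_apply] using this
    rw [Finset.sum_eq_single i
      (fun l _ hl => by rw [hz l (Finset.mem_erase.mpr ⟨hl, Finset.mem_univ l⟩), zero_mul])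
      (fun h => absurd (Finset.mem_univ i) h)] at h2
    rw [h1, one_mul, hMii] at h2
    have : d i = 0 := by linarith
    rw [hdapp] at this
    exact this
  · -- out-degree 0 → Ω i i = 1
    intro h0
    have hdi : d i = 0 := by rw [hdapp]; exact h0
    have hAi : ∀ l, A i l = 0 := by
      intro l
      have := (Finset.sum_eq_zero_iff_of_nonneg (fun l _ => hA0 i l)).mp h0
      exact this l (Finset.mem_univ l)
    have hMrow : ∀ l, M i l = if i = l then 1 else 0 := by
      intro l
      simp only [hMdef, hL, hD, Matrix.add_apply, Matrix.sub_apply, Matrix.one_apply,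
        Matrix.diagonal_apply, hAi l]
      split <;> simp [hdi]
    have h2 : ∑ l, M i l * M⁻¹ l i = 1 := by
      have := congrFun (congrFun hMΩ i) i
      simpa [Matrix.mul_apply, Matrix.one_apply] using this
    rw [Finset.sum_congr rfl (fun l _ => by rw [hMrow l])] at h2
    simpa [Finset.sum_ite_eq, ite_mul] using h2
end

section
/- For the fundamental matrix Ω = (I+L)^{-1} of a directed graph, for any pair of distinct nodes i and j it holds that 0 ≤ ω_{ji} < ω_{ii} ≤ 1. -/
/-!
Write `M = 1 + L`, so that `(M x) k = x k + ∑ l, A k l * (x k - x l)`. Since `A ≥ 0`, at a maximum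
of `x` the sum is nonnegative and at a minimum it is nonpositive: a discrete maximum principle
`min (M x) ≤ min x`, `max x ≤ max (M x)`. This makes `M` injective, hence invertible, and applied
to the `i`-th column `x` of `Ω`, for which `M x = Pi.single i 1`, it gives `x ≥ 0` and `x i ≤ 1`.
Moreover any maximum of `x` sits at `i`: a maximum at `k ≠ i` would give `x ≤ 0`, so `x = 0`.
-/

open Matrix Finset

namespace Matrix

variable {ι : Type*} [Fintype ι] [DecidableEq ι] {A : Matrix ι ι ℝ}

def outLaplacian (A : Matrix ι ι ℝ) : Matrix ι ι ℝ :=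
  diagonal (fun i => ∑ j, A i j) - A

theorem one_add_outLaplacian_mulVec_apply (x : ι → ℝ) (k : ι) :
    ((1 + outLaplacian A) *ᵥ x) k = x k + ∑ l, A k l * (x k - x l) := by
  rw [outLaplacian, add_mulVec, one_mulVec, sub_mulVec, Pi.add_apply, Pi.sub_apply,
    mulVec_diagonal, mulVec, dotProduct, sum_mul, ← sum_sub_distrib]
  simp only [mul_sub]

theorem le_one_add_outLaplacian_mulVec_of_forall_le (hA : ∀ k l, 0 ≤ A k l) {x : ι → ℝ} {k : ι}
    (hk : ∀ l, x l ≤ x k) : x k ≤ ((1 + outLaplacian A) *ᵥ x) k := by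
  rw [one_add_outLaplacian_mulVec_apply]
  exact le_add_of_nonneg_right <|
    sum_nonneg fun l _ => mul_nonneg (hA k l) (sub_nonneg.mpr (hk l))

theorem one_add_outLaplacian_mulVec_le_of_forall_ge (hA : ∀ k l, 0 ≤ A k l) {x : ι → ℝ} {k : ι}
    (hk : ∀ l, x k ≤ x l) : ((1 + outLaplacian A) *ᵥ x) k ≤ x k := by
  rw [one_add_outLaplacian_mulVec_apply]
  exact add_le_of_nonpos_right <|
    sum_nonpos fun l _ => mul_nonpos_of_nonneg_of_nonpos (hA k l) (sub_nonpos.mpr (hk l))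

theorem nonneg_of_one_add_outLaplacian_mulVec_nonneg (hA : ∀ k l, 0 ≤ A k l) {x : ι → ℝ}
    (hx : 0 ≤ (1 + outLaplacian A) *ᵥ x) : 0 ≤ x := by
  intro l
  have : Nonempty ι := ⟨l⟩
  obtain ⟨k, hk⟩ := Finite.exists_min x
  exact (hx k).trans <| (one_add_outLaplacian_mulVec_le_of_forall_ge hA hk).trans (hk l)

theorem isUnit_one_add_outLaplacian (hA : ∀ k l, 0 ≤ A k l) : IsUnit (1 + outLaplacian A) := by
  refine mulVec_injective_iff_isUnit.mp fun x y hxy => ?_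
  have h0 : (1 + outLaplacian A) *ᵥ (x - y) = 0 := by rw [mulVec_sub, hxy, sub_self]
  have hle := nonneg_of_one_add_outLaplacian_mulVec_nonneg hA h0.ge
  have hge := nonneg_of_one_add_outLaplacian_mulVec_nonneg hA (x := y - x)
    (by rw [← neg_sub, mulVec_neg, h0, neg_zero])
  exact le_antisymm (sub_nonneg.mp hge) (sub_nonneg.mp hle)

theorem eq_of_one_add_outLaplacian_mulVec_eq_single (hA : ∀ k l, 0 ≤ A k l) {x : ι → ℝ} {i k : ι}
    (hx : (1 + outLaplacian A) *ᵥ x = Pi.single i 1) (hk : ∀ l, x l ≤ x k) : k = i := by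
  by_contra hki
  have hx0 : 0 ≤ x :=
    nonneg_of_one_add_outLaplacian_mulVec_nonneg hA (hx ▸ Pi.single_nonneg.mpr zero_le_one)
  have hxk : x k ≤ 0 := by
    simpa [hx, Pi.single_apply, hki] using le_one_add_outLaplacian_mulVec_of_forall_le hA hk
  have hzero : x = 0 := funext fun l => le_antisymm ((hk l).trans hxk) (hx0 l)
  simpa [hzero] using congrFun hx i

end Matrix

theorem stmt_3_general {n : ℕ} (A : Matrix (Fin n) (Fin n) ℝ)
    (hA : ∀ i j, A i j = 0 ∨ A i j = 1)
    (D : Matrix (Fin n) (Fin n) ℝ) (hD : D = Matrix.diagonal (fun i => ∑ j, A i j))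
    (L : Matrix (Fin n) (Fin n) ℝ) (hL : L = D - A)
    (Ω : Matrix (Fin n) (Fin n) ℝ) (hΩ : Ω = (1 + L)⁻¹)
    (i j : Fin n) (hij : i ≠ j) :
    0 ≤ Ω j i ∧ Ω j i < Ω i i ∧ Ω i i ≤ 1 := by
  have hA₀ : ∀ k l, 0 ≤ A k l := fun k l => by rcases hA k l with h | h <;> simp [h]
  obtain rfl : L = outLaplacian A := by rw [hL, hD, outLaplacian]
  subst hΩ
  set x := (1 + outLaplacian A)⁻¹.col i with hx_def
  have hx : (1 + outLaplacian A) *ᵥ x = Pi.single i 1 := by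
    rw [hx_def, ← mulVec_single_one, mulVec_mulVec, mul_nonsing_inv _
      ((isUnit_iff_isUnit_det _).mp (isUnit_one_add_outLaplacian hA₀)), one_mulVec]
  show 0 ≤ x j ∧ x j < x i ∧ x i ≤ 1
  have : Nonempty (Fin n) := ⟨i⟩
  obtain ⟨k, hk⟩ := Finite.exists_max x
  obtain rfl := eq_of_one_add_outLaplacian_mulVec_eq_single hA₀ hx hk
  refine ⟨nonneg_of_one_add_outLaplacian_mulVec_nonneg hA₀
      (hx ▸ Pi.single_nonneg.mpr zero_le_one) j, (hk j).lt_of_ne fun hjk => hij ?_, ?_⟩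
  · exact (eq_of_one_add_outLaplacian_mulVec_eq_single hA₀ hx
      fun l => (hk l).trans_eq hjk.symm).symm
  · simpa [hx] using le_one_add_outLaplacian_mulVec_of_forall_le hA₀ hk

/-- For any pair of distinct nodes i and j, the fundamental matrix Ω = (I+L)⁻¹
satisfies 0 ≤ ω_{ji} < ω_{ii} ≤ 1. -/
theorem stmt_3 {n : ℕ} (A : Matrix (Fin n) (Fin n) ℝ)
    (hA : ∀ i j, A i j = 0 ∨ A i j = 1) (hdiag : ∀ i, A i i = 0)
    (D : Matrix (Fin n) (Fin n) ℝ) (hD : D = Matrix.diagonal (fun i => ∑ j, A i j))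
    (L : Matrix (Fin n) (Fin n) ℝ) (hL : L = D - A)
    (Ω : Matrix (Fin n) (Fin n) ℝ) (hΩ : Ω = (1 + L)⁻¹)
    (i j : Fin n) (hij : i ≠ j) :
    0 ≤ Ω j i ∧ Ω j i < Ω i i ∧ Ω i i ≤ 1 :=
  stmt_3_general A hA D hD L hL Ω hΩ i j hij
end

section
/- For every node i of a directed graph, the diagonal entry ω_{ii} of the fundamental matrix Ω = (I+L)^{-1} satisfies 1/(1+d_i) ≤ ω_{ii} ≤ 2/(2+d_i), where d_i is the out-degree of node i. -/
/-!
The fundamental matrix `Ω = (1 + L)⁻¹` is row-stochastic: its rows sum to `1` because the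
constant vectors lie in the kernel of `L`, and its entries are nonnegative by the discrete maximum
principle for `1 + L`. The lower bound is then the `(i, i)` entry of `(1 + L) Ω = 1`, whose
off-diagonal contribution `∑ₖ A i k * Ω k i` is nonnegative. The upper bound is the `(i, i)` entry
of `Ω (1 + L) = 1`, whose off-diagonal contribution `∑ₖ Ω i k * A k i` is at most
`∑_{k ≠ i} Ω i k = 1 - Ω i i` when the weights lie in `[0, 1]` and there are no loops.
-/

open Matrix Finset

namespace Matrix

variable {ι : Type*} [Fintype ι] [DecidableEq ι]

def outDegree (A : Matrix ι ι ℝ) (i : ι) : ℝ := ∑ j, A i j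

def laplacian (A : Matrix ι ι ℝ) : Matrix ι ι ℝ := diagonal (outDegree A) - A

noncomputable def fundamentalMatrix (A : Matrix ι ι ℝ) : Matrix ι ι ℝ := (1 + laplacian A)⁻¹

variable (A : Matrix ι ι ℝ)

theorem laplacian_mulVec_apply (x : ι → ℝ) (i : ι) :
    (laplacian A *ᵥ x) i = ∑ j, A i j * (x i - x j) := by
  rw [laplacian, sub_mulVec, Pi.sub_apply, mulVec_diagonal, outDegree, Finset.sum_mul]
  simp only [mulVec, dotProduct, mul_sub, Finset.sum_sub_distrib]

theorem laplacian_mulVec_const (c : ℝ) : laplacian A *ᵥ (fun _ => c) = 0 := by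
  ext i
  simp [laplacian_mulVec_apply]

theorem laplacian_mul_apply (X : Matrix ι ι ℝ) (i j : ι) :
    (laplacian A * X) i j = outDegree A i * X i j - ∑ k, A i k * X k j := by
  rw [laplacian, Matrix.sub_mul, sub_apply, diagonal_mul, mul_apply]

theorem mul_laplacian_apply (X : Matrix ι ι ℝ) (i j : ι) :
    (X * laplacian A) i j = X i j * outDegree A j - ∑ k, X i k * A k j := by
  rw [laplacian, Matrix.mul_sub, sub_apply, mul_diagonal, mul_apply]

variable {A}

/-- Discrete maximum principle: at a minimum `k` of `x`, every term `A k j * (x k - x j)` of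
`(L x) k` is `≤ 0`, so `x k ≥ ((1 + L) x) k`. -/
theorem nonneg_of_one_add_laplacian_mulVec_nonneg (hA : ∀ i j, 0 ≤ A i j) {x : ι → ℝ}
    (hx : ∀ i, 0 ≤ ((1 + laplacian A) *ᵥ x) i) (i : ι) : 0 ≤ x i := by
  have : Nonempty ι := ⟨i⟩
  obtain ⟨k, hk⟩ := Finite.exists_min x
  have hLk : (laplacian A *ᵥ x) k ≤ 0 := by
    rw [laplacian_mulVec_apply]
    exact Finset.sum_nonpos fun j _ =>
      mul_nonpos_of_nonneg_of_nonpos (hA k j) (sub_nonpos.2 (hk j))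
  have hxk := hx k
  rw [add_mulVec, one_mulVec, Pi.add_apply] at hxk
  linarith [hk i]

theorem det_one_add_laplacian_ne_zero (hA : ∀ i j, 0 ≤ A i j) :
    (1 + laplacian A).det ≠ 0 := by
  rw [Ne, ← exists_mulVec_eq_zero_iff]
  rintro ⟨v, hv, hMv⟩
  refine hv (funext fun i => le_antisymm ?_ ?_)
  · simpa using nonneg_of_one_add_laplacian_mulVec_nonneg hA (x := -v)
      (by simp [mulVec_neg, hMv]) i
  · exact nonneg_of_one_add_laplacian_mulVec_nonneg hA (by simp [hMv]) i

theorem fundamentalMatrix_nonneg (hA : ∀ i j, 0 ≤ A i j) (i j : ι) :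
    0 ≤ fundamentalMatrix A i j := by
  have hcol : (1 + laplacian A) *ᵥ (fundamentalMatrix A *ᵥ Pi.single j 1) = Pi.single j 1 := by
    rw [mulVec_mulVec, fundamentalMatrix,
      mul_nonsing_inv _ (det_one_add_laplacian_ne_zero hA).isUnit, one_mulVec]
  simpa [mulVec_single_one] using nonneg_of_one_add_laplacian_mulVec_nonneg hA
    (x := fundamentalMatrix A *ᵥ Pi.single j 1)
    (fun k => by rw [hcol]; by_cases hk : k = j <;> simp [hk]) i

theorem sum_fundamentalMatrix_row (hA : ∀ i j, 0 ≤ A i j) (i : ι) :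
    ∑ j, fundamentalMatrix A i j = 1 := by
  have hconst : (1 + laplacian A) *ᵥ (fun _ => (1 : ℝ)) = fun _ => 1 := by
    rw [add_mulVec, one_mulVec, laplacian_mulVec_const, add_zero]
  have h := congrFun (congrArg (fundamentalMatrix A *ᵥ ·) hconst) i
  rw [mulVec_mulVec, fundamentalMatrix,
    nonsing_inv_mul _ (det_one_add_laplacian_ne_zero hA).isUnit, one_mulVec] at h
  simpa [mulVec, dotProduct, fundamentalMatrix] using h.symm

theorem one_add_outDegree_mul_fundamentalMatrix_self_left (hA : ∀ i j, 0 ≤ A i j) (i : ι) :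
    (1 + outDegree A i) * fundamentalMatrix A i i
      = 1 + ∑ k, A i k * fundamentalMatrix A k i := by
  have h := congrFun (congrFun (mul_nonsing_inv (1 + laplacian A)
    (det_one_add_laplacian_ne_zero hA).isUnit) i) i
  rw [add_mul, add_apply, one_mul, laplacian_mul_apply, one_apply_eq] at h
  rw [fundamentalMatrix]
  linarith

theorem one_add_outDegree_mul_fundamentalMatrix_self_right (hA : ∀ i j, 0 ≤ A i j) (i : ι) :
    (1 + outDegree A i) * fundamentalMatrix A i i
      = 1 + ∑ k, fundamentalMatrix A i k * A k i := by
  have h := congrFun (congrFun (nonsing_inv_mul (1 + laplacian A)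
    (det_one_add_laplacian_ne_zero hA).isUnit) i) i
  rw [mul_add, add_apply, mul_one, mul_laplacian_apply, one_apply_eq] at h
  rw [fundamentalMatrix]
  linarith

theorem one_div_one_add_outDegree_le_fundamentalMatrix_self (hA : ∀ i j, 0 ≤ A i j) (i : ι) :
    1 / (1 + outDegree A i) ≤ fundamentalMatrix A i i := by
  have hd : 0 ≤ outDegree A i := Finset.sum_nonneg fun j _ => hA i j
  have hsum : 0 ≤ ∑ k, A i k * fundamentalMatrix A k i :=
    Finset.sum_nonneg fun k _ => mul_nonneg (hA i k) (fundamentalMatrix_nonneg hA k i)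
  rw [div_le_iff₀ (by linarith)]
  linarith [one_add_outDegree_mul_fundamentalMatrix_self_left hA i]

theorem fundamentalMatrix_self_le_two_div_two_add_outDegree (hA : ∀ i j, 0 ≤ A i j)
    (hA₁ : ∀ i j, A i j ≤ 1) (hloop : ∀ i, A i i = 0) (i : ι) :
    fundamentalMatrix A i i ≤ 2 / (2 + outDegree A i) := by
  have hd : 0 ≤ outDegree A i := Finset.sum_nonneg fun j _ => hA i j
  have hsum : ∑ k, fundamentalMatrix A i k * A k i ≤ 1 - fundamentalMatrix A i i := calc
    ∑ k, fundamentalMatrix A i k * A k i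
        = ∑ k ∈ univ.erase i, fundamentalMatrix A i k * A k i := by
      rw [← Finset.add_sum_erase _ _ (mem_univ i), hloop, mul_zero, zero_add]
    _ ≤ ∑ k ∈ univ.erase i, fundamentalMatrix A i k :=
      Finset.sum_le_sum fun k _ =>
        mul_le_of_le_one_right (fundamentalMatrix_nonneg hA i k) (hA₁ k i)
    _ = 1 - fundamentalMatrix A i i := by
      rw [← sum_fundamentalMatrix_row hA i, ← Finset.add_sum_erase _ _ (mem_univ i)]
      ring
  rw [le_div_iff₀ (by linarith)]
  linarith [one_add_outDegree_mul_fundamentalMatrix_self_right hA i]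

end Matrix

/-- For every node i, the diagonal entry of the fundamental matrix satisfies
1/(1+d_i) ≤ ω_{ii} ≤ 2/(2+d_i), where d_i is the out-degree of node i. -/
theorem stmt_4 {n : ℕ} (A : Matrix (Fin n) (Fin n) ℝ)
    (hA : ∀ i j, A i j = 0 ∨ A i j = 1) (hdiag : ∀ i, A i i = 0)
    (d : Fin n → ℝ) (hd : ∀ i, d i = ∑ j, A i j)
    (L : Matrix (Fin n) (Fin n) ℝ) (hL : L = Matrix.diagonal d - A)
    (Ω : Matrix (Fin n) (Fin n) ℝ) (hΩ : Ω = (1 + L)⁻¹) (i : Fin n) :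
    1 / (1 + d i) ≤ Ω i i ∧ Ω i i ≤ 2 / (2 + d i) := by
  have hd' : d = outDegree A := funext hd
  have hΩ' : Ω = fundamentalMatrix A := by rw [hΩ, hL, hd']; rfl
  have hA₀ : ∀ i j, 0 ≤ A i j := fun i j => by rcases hA i j with h | h <;> simp [h]
  have hA₁ : ∀ i j, A i j ≤ 1 := fun i j => by rcases hA i j with h | h <;> simp [h]
  rw [hΩ', hd']
  exact ⟨one_div_one_add_outDegree_le_fundamentalMatrix_self hA₀ i,
    fundamentalMatrix_self_le_two_div_two_add_outDegree hA₀ hA₁ hdiag i⟩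
end

section
/- If the expressed-opinion vector evolves by z(t+1) = (I+D)^{-1}(s + A z(t)), then z(t) converges as t → ∞ to the equilibrium z = (I+L)^{-1} s. -/
open Matrix Finset Filter Topology

/-- If the expressed-opinion vector evolves by z(t+1) = (I+D)⁻¹(s + A z(t)),
i.e. z_i(t+1) = (s_i + ∑_{j∈N(i)} z_j(t))/(1+d_i), then z(t) converges as t → ∞
to the equilibrium (I+L)⁻¹ s. -/
theorem stmt_6 {n : ℕ} (A : Matrix (Fin n) (Fin n) ℝ)
    (hA : ∀ i j, A i j = 0 ∨ A i j = 1) (hdiag : ∀ i, A i i = 0)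
    (d : Fin n → ℝ) (hd : ∀ i, d i = ∑ j, A i j)
    (L : Matrix (Fin n) (Fin n) ℝ) (hL : L = Matrix.diagonal d - A)
    (s : Fin n → ℝ) (hs : ∀ i, s i ∈ Set.Icc (0 : ℝ) 1)
    (z : ℕ → Fin n → ℝ)
    (hz : ∀ t i, z (t + 1) i = (s i + ∑ j, A i j * z t j) / (1 + d i)) :
    Tendsto z atTop (𝓝 ((1 + L)⁻¹ *ᵥ s)) := by
  set w := (1 + L)⁻¹ *ᵥ s with hw
  rcases Nat.eq_zero_or_pos n with h0 | hn
  · subst h0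
    have : z = fun _ => w := funext fun t => funext fun i => i.elim0
    rw [this]; exact tendsto_const_nhds
  have hA01 : ∀ i j, 0 ≤ A i j := fun i j => by rcases hA i j with h | h <;> simp [h]
  have hd0 : ∀ i, 0 ≤ d i := fun i => (hd i) ▸ Finset.sum_nonneg fun j _ => hA01 i j
  have hdpos : ∀ i, 0 < 1 + d i := fun i => by linarith [hd0 i]
  have hMentry : ∀ i j, (1 + L) i j = (if i = j then 1 + d i else 0) - A i j := by
    intro i j
    simp only [hL, Matrix.add_apply, Matrix.sub_apply, Matrix.one_apply, Matrix.diagonal_apply]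
    split <;> ring
  -- invertibility via diagonal dominance
  have hdet : (1 + L).det ≠ 0 := by
    apply det_ne_zero_of_sum_row_lt_diag
    intro k
    have h1 : (1 + L) k k = 1 + d k := by rw [hMentry]; simp [hdiag k]
    have h2 : ∑ j ∈ Finset.univ.erase k, ‖(1 + L) k j‖ = d k := by
      have : ∀ j ∈ Finset.univ.erase k, ‖(1 + L) k j‖ = A k j := by
        intro j hj
        have hjk : ¬ (k = j) := fun h => (Finset.mem_erase.mp hj).1 h.symm
        rw [hMentry]; simp [hjk, abs_of_nonneg (hA01 k j)]
      rw [Finset.sum_congr rfl this, hd k,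
        ← Finset.sum_erase_add _ _ (Finset.mem_univ k), hdiag k, add_zero]
    rw [h1, h2, Real.norm_eq_abs, abs_of_pos (hdpos k)]
    linarith [hd0 k]
  have hfix : (1 + L) *ᵥ w = s := by
    rw [hw, Matrix.mulVec_mulVec, Matrix.mul_nonsing_inv _ (isUnit_iff_ne_zero.mpr hdet),
      Matrix.one_mulVec]
  have hstar : ∀ i, w i = (s i + ∑ j, A i j * w j) / (1 + d i) := by
    intro i
    have := congrFun hfix i
    rw [Matrix.mulVec, dotProduct] at this
    have hsum : ∑ j, (1 + L) i j * w j
        = (1 + d i) * w i - ∑ j, A i j * w j := by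
      simp only [hMentry, sub_mul, Finset.sum_sub_distrib, ite_mul, zero_mul]
      rw [Finset.sum_ite_eq (Finset.univ) i (fun j => (1 + d i) * w j),
        if_pos (Finset.mem_univ i)]
    rw [hsum] at this
    rw [eq_div_iff (hdpos i).ne']
    linarith [this]
  -- contraction constant
  have hne : (Finset.univ : Finset (Fin n)).Nonempty := by
    simpa [Finset.univ_nonempty_iff] using Fin.pos_iff_nonempty.mp hn
  set c : ℝ := Finset.univ.sup' hne (fun i => d i / (1 + d i)) with hc
  have hc1 : c < 1 := by
    rw [hc, Finset.sup'_lt_iff]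
    intro i _
    rw [div_lt_one (hdpos i)]; linarith
  have hc0 : 0 ≤ c := by
    obtain ⟨i0, _⟩ := hne
    exact le_trans (div_nonneg (hd0 i0) (hdpos i0).le)
      (hc ▸ Finset.le_sup' (fun i => d i / (1 + d i)) (Finset.mem_univ i0))
  -- one-step contraction
  have key : ∀ t, ‖z (t + 1) - w‖ ≤ c * ‖z t - w‖ := by
    intro t
    rw [pi_norm_le_iff_of_nonneg (mul_nonneg hc0 (norm_nonneg _))]
    intro i
    have hstep : (z (t + 1) - w) i = (∑ j, A i j * (z t j - w j)) / (1 + d i) := by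
      simp only [Pi.sub_apply, hz t i, hstar i]
      rw [div_sub_div_same]
      congr 1
      simp only [mul_sub, Finset.sum_sub_distrib]
      ring
    rw [hstep, Real.norm_eq_abs, abs_div, abs_of_pos (hdpos i)]
    have hb : |∑ j, A i j * (z t j - w j)| ≤ d i * ‖z t - w‖ := by
      calc |∑ j, A i j * (z t j - w j)| ≤ ∑ j, |A i j * (z t j - w j)| :=
            Finset.abs_sum_le_sum_abs _ _
        _ ≤ ∑ j, A i j * ‖z t - w‖ := by
            apply Finset.sum_le_sum
            intro j _
            rw [abs_mul, abs_of_nonneg (hA01 i j)]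
            exact mul_le_mul_of_nonneg_left (norm_le_pi_norm (z t - w) j) (hA01 i j)
        _ = d i * ‖z t - w‖ := by rw [← Finset.sum_mul, ← hd i]
    calc |∑ j, A i j * (z t j - w j)| / (1 + d i)
        ≤ d i * ‖z t - w‖ / (1 + d i) := by
          gcongr
          exact (hdpos i).le
      _ = d i / (1 + d i) * ‖z t - w‖ := by ring
      _ ≤ c * ‖z t - w‖ :=
          mul_le_mul_of_nonneg_right
            (hc ▸ Finset.le_sup' (fun i => d i / (1 + d i)) (Finset.mem_univ i))
            (norm_nonneg _)
  have hbound : ∀ t, ‖z t - w‖ ≤ c ^ t * ‖z 0 - w‖ := by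
    intro t
    induction t with
    | zero => simp
    | succ t ih =>
      calc ‖z (t + 1) - w‖ ≤ c * ‖z t - w‖ := key t
        _ ≤ c * (c ^ t * ‖z 0 - w‖) := mul_le_mul_of_nonneg_left ih hc0
        _ = c ^ (t + 1) * ‖z 0 - w‖ := by ring
  rw [tendsto_iff_norm_sub_tendsto_zero]
  have hlim : Tendsto (fun t => c ^ t * ‖z 0 - w‖) atTop (𝓝 0) := by
    have := (tendsto_pow_atTop_nhds_zero_of_lt_one hc0 hc1).mul_const ‖z 0 - w‖
    simpa using this
  exact squeeze_zero (fun t => norm_nonneg _) hbound hlim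
end
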